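/- arXiv:2504.10262 — 2 statements merged into one kernel-verified Lean document; each statement's English description precedes it below -/
import Mathlib

section
/- For every algebra homomorphism η from U⁺ to ℂ one has η(E₁)·η(E₂) = 0 and η(E₃) = (1 − q⁻¹)·η(E₁)·η(E₂). In particular there is no algebra homomorphism η: U⁺ → ℂ with both η(E₁) ≠ 0 and η(E₂) ≠ 0 (no non-singular Whittaker function exists for U_q(sl₃)). -/
/-!
Formalization of Whittaker modules for the quantum group `U_q(sl₃)`.

Generator indices in the free algebra on `Fin 8`:
`0 = E₁`, `1 = E₂`, `2 = F₁`, `3 = F₂`, `4 = K₁`, `5 = K₁⁻¹`, `6 = K₂`, `7 = K₂⁻¹`.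
-/

noncomputable section
open scoped BigOperators

namespace UqSl3

def X (i : Fin 8) : FreeAlgebra ℂ (Fin 8) := FreeAlgebra.ι ℂ i

/-- The defining relations of `U_q(sl₃)` (Jimbo presentation). -/
inductive rel (q : ℂ) : FreeAlgebra ℂ (Fin 8) → FreeAlgebra ℂ (Fin 8) → Prop
  | K1K1i : rel q (X 4 * X 5) 1
  | K1iK1 : rel q (X 5 * X 4) 1
  | K2K2i : rel q (X 6 * X 7) 1
  | K2iK2 : rel q (X 7 * X 6) 1
  | Kcomm (i j : Fin 8) (hi : 4 ≤ i) (hj : 4 ≤ j) : rel q (X i * X j) (X j * X i)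
  | E1F1 : rel q (X 0 * X 2) (X 2 * X 0 + (q - q⁻¹)⁻¹ • (X 4 - X 5))
  | E2F2 : rel q (X 1 * X 3) (X 3 * X 1 + (q - q⁻¹)⁻¹ • (X 6 - X 7))
  | E1F2 : rel q (X 0 * X 3) (X 3 * X 0)
  | E2F1 : rel q (X 1 * X 2) (X 2 * X 1)
  | K1E1 : rel q (X 4 * X 0) ((q ^ 2 : ℂ) • (X 0 * X 4))
  | K1E2 : rel q (X 4 * X 1) (q⁻¹ • (X 1 * X 4))
  | K2E1 : rel q (X 6 * X 0) (q⁻¹ • (X 0 * X 6))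
  | K2E2 : rel q (X 6 * X 1) ((q ^ 2 : ℂ) • (X 1 * X 6))
  | K1F1 : rel q (X 4 * X 2) (((q ^ 2)⁻¹ : ℂ) • (X 2 * X 4))
  | K1F2 : rel q (X 4 * X 3) (q • (X 3 * X 4))
  | K2F1 : rel q (X 6 * X 2) (q • (X 2 * X 6))
  | K2F2 : rel q (X 6 * X 3) (((q ^ 2)⁻¹ : ℂ) • (X 3 * X 6))
  | serreE1 : rel q (X 0 ^ 2 * X 1 + X 1 * X 0 ^ 2) ((q + q⁻¹) • (X 0 * X 1 * X 0))
  | serreE2 : rel q (X 1 ^ 2 * X 0 + X 0 * X 1 ^ 2) ((q + q⁻¹) • (X 1 * X 0 * X 1))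
  | serreF1 : rel q (X 2 ^ 2 * X 3 + X 3 * X 2 ^ 2) ((q + q⁻¹) • (X 2 * X 3 * X 2))
  | serreF2 : rel q (X 3 ^ 2 * X 2 + X 2 * X 3 ^ 2) ((q + q⁻¹) • (X 3 * X 2 * X 3))

/-- The quantum group `U = U_q(sl₃)`. -/
abbrev Uq (q : ℂ) := RingQuot (rel q)

variable (q α : ℂ)

def mkU : FreeAlgebra ℂ (Fin 8) →ₐ[ℂ] Uq q := RingQuot.mkAlgHom ℂ (rel q)

def E₁ : Uq q := mkU q (X 0)
def E₂ : Uq q := mkU q (X 1)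
def F₁ : Uq q := mkU q (X 2)
def F₂ : Uq q := mkU q (X 3)
def K₁ : Uq q := mkU q (X 4)
def K₁i : Uq q := mkU q (X 5)
def K₂ : Uq q := mkU q (X 6)
def K₂i : Uq q := mkU q (X 7)

lemma rel_eq {a b : FreeAlgebra ℂ (Fin 8)} (h : rel q a b) : mkU q a = mkU q b :=
  RingQuot.mkAlgHom_rel ℂ h

lemma K1_mul_K1i : K₁ q * K₁i q = 1 := by
  simpa [K₁, K₁i, map_mul, map_one] using rel_eq q rel.K1K1i
lemma K1i_mul_K1 : K₁i q * K₁ q = 1 := by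
  simpa [K₁, K₁i, map_mul, map_one] using rel_eq q rel.K1iK1
lemma K2_mul_K2i : K₂ q * K₂i q = 1 := by
  simpa [K₂, K₂i, map_mul, map_one] using rel_eq q rel.K2K2i
lemma K2i_mul_K2 : K₂i q * K₂ q = 1 := by
  simpa [K₂, K₂i, map_mul, map_one] using rel_eq q rel.K2iK2

/-- `K₁` as a unit. -/
def K₁u : (Uq q)ˣ := ⟨K₁ q, K₁i q, K1_mul_K1i q, K1i_mul_K1 q⟩
/-- `K₂` as a unit. -/
def K₂u : (Uq q)ˣ := ⟨K₂ q, K₂i q, K2_mul_K2i q, K2i_mul_K2 q⟩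
/-- `K = K₁K₂²` as a unit. -/
def Ku : (Uq q)ˣ := K₁u q * K₂u q ^ 2

/-- Integer powers `K₂^l`. -/
def K2z (l : ℤ) : Uq q := ((K₂u q ^ l : (Uq q)ˣ) : Uq q)
/-- Integer powers `K^p`, where `K = K₁K₂²`. -/
def Kz (p : ℤ) : Uq q := ((Ku q ^ p : (Uq q)ˣ) : Uq q)

/-- `E₃ = E₁E₂ - q⁻¹E₂E₁`. -/
def E₃ : Uq q := E₁ q * E₂ q - q⁻¹ • (E₂ q * E₁ q)
/-- `F₃ = F₁F₂ - qF₂F₁`. -/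
def F₃ : Uq q := F₁ q * F₂ q - q • (F₂ q * F₁ q)
/-- The Casimir element `C₁ = F₁E₁ + (qK₁ + q⁻¹K₁⁻¹)/(q - q⁻¹)²`. -/
def C₁ : Uq q := F₁ q * E₁ q + ((q - q⁻¹) ^ 2)⁻¹ • (q • K₁ q + q⁻¹ • K₁i q)

/-- The quantum integer `[k] = (q^k - q^{-k})/(q - q⁻¹)`. -/
def qint (k : ℤ) : ℂ := (q ^ k - q ^ (-k)) / (q - q⁻¹)
/-- The quantum factorial `[k]!`. -/
def qfact : ℕ → ℂ
  | 0 => 1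
  | n + 1 => qint q ((n : ℤ) + 1) * qfact n
/-- The quantum binomial coefficient (defined to be `0` when `k > m`). -/
def qbinom (m k : ℕ) : ℂ := if k ≤ m then qfact q m / (qfact q k * qfact q (m - k)) else 0

/-- `[K₂; m] = (q^m K₂ - q^{-m} K₂⁻¹)/(q - q⁻¹)`. -/
def brK2 (m : ℤ) : Uq q := (q - q⁻¹)⁻¹ • ((q ^ m) • K₂ q - (q ^ (-m)) • K₂i q)

/-- The subalgebra `U⁺` generated by `E₁, E₂`. -/
def Uplus : Subalgebra ℂ (Uq q) := Algebra.adjoin ℂ {E₁ q, E₂ q}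
lemma E1_mem_Uplus : E₁ q ∈ Uplus q := Algebra.subset_adjoin (by simp)
lemma E2_mem_Uplus : E₂ q ∈ Uplus q := Algebra.subset_adjoin (by simp)
lemma E3_mem_Uplus : E₃ q ∈ Uplus q :=
  sub_mem (mul_mem (E1_mem_Uplus q) (E2_mem_Uplus q))
    (Subalgebra.smul_mem _ (mul_mem (E2_mem_Uplus q) (E1_mem_Uplus q)) _)

/-- The commutative subalgebra `ℂ[K^{±1}, C₁]` of `U`. -/
def Acal : Subalgebra ℂ (Uq q) := Algebra.adjoin ℂ {Kz q 1, Kz q (-1), C₁ q}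
lemma K_mem_Acal : Kz q 1 ∈ Acal q := Algebra.subset_adjoin (by simp)
lemma Ki_mem_Acal : Kz q (-1) ∈ Acal q := Algebra.subset_adjoin (by simp)
lemma C1_mem_Acal : C₁ q ∈ Acal q := Algebra.subset_adjoin (by simp)

/-- `K` as an element of `ℂ[K^{±1}, C₁]`. -/
def KA : Acal q := ⟨Kz q 1, K_mem_Acal q⟩
/-- `C₁` as an element of `ℂ[K^{±1}, C₁]`. -/
def C1A : Acal q := ⟨C₁ q, C1_mem_Acal q⟩

/-- The critical polynomial `h_n(K, C₁) = q^{3-2n}K + q^{2n-3}K⁻¹ - (q - q⁻¹)²C₁`. -/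
def hn (n : ℕ) : Uq q :=
  q ^ (3 - 2 * (n : ℤ)) • Kz q 1 + q ^ (2 * (n : ℤ) - 3) • Kz q (-1) - ((q - q⁻¹) ^ 2) • C₁ q
lemma hn_mem_Acal (n : ℕ) : hn q n ∈ Acal q :=
  sub_mem (add_mem (Subalgebra.smul_mem _ (K_mem_Acal q) _)
      (Subalgebra.smul_mem _ (Ki_mem_Acal q) _))
    (Subalgebra.smul_mem _ (C1_mem_Acal q) _)
/-- `h_n(K, C₁)` as an element of `ℂ[K^{±1}, C₁]`. -/
def hnA (n : ℕ) : Acal q := ⟨hn q n, hn_mem_Acal q n⟩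

/-- The left ideal `U(E₁ - α) + UE₂`. -/
def lId : Submodule (Uq q) (Uq q) :=
  Submodule.span (Uq q) {E₁ q - algebraMap ℂ (Uq q) α, E₂ q}
/-- The universal Whittaker module `M(η) = U/(U(E₁ - α) + UE₂)`. -/
abbrev Mmod := Uq q ⧸ lId q α
/-- The canonical Whittaker generator `v_η` of `M(η)`. -/
def vη : Mmod q α := Submodule.Quotient.mk 1

/-- The submodule `W(η, I) = U·I·v_η` of `M(η)`. -/
def Wmod (I : Ideal (Acal q)) : Submodule (Uq q) (Mmod q α) :=
  Submodule.span (Uq q) ((fun Q : Acal q => (Q : Uq q) • vη q α) '' (I : Set (Acal q)))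

/-- The maximal ideal `J(κ, c)` of `ℂ[K^{±1}, C₁]` generated by `K - κ` and `C₁ - c`. -/
def Jid (κ c : ℂ) : Ideal (Acal q) :=
  Ideal.span {KA q - algebraMap ℂ (Acal q) κ, C1A q - algebraMap ℂ (Acal q) c}
/-- `W(η; κ, c) = W(η, J(κ, c))`. -/
def WmodJ (κ c : ℂ) : Submodule (Uq q) (Mmod q α) := Wmod q α (Jid q κ c)
/-- `V(η; κ, c) = M(η)/W(η; κ, c)`. -/
abbrev Vmod (κ c : ℂ) := Mmod q α ⧸ WmodJ q α κ c

/-- The coefficients `a_{kj}(n)`. -/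
def akj (n k j : ℕ) : ℂ :=
  (-1) ^ j * α ^ k * (q ^ 2 - 1) ^ k * q ^ ((j : ℤ) * ((n : ℤ) - 3)) *
    q ^ (((k : ℤ) * (2 * (n : ℤ) + 2 * (j : ℤ) + (k : ℤ) - 7)) / 2) *
    qbinom q n k * qbinom q (n - k) j

/-- The element `u(n, l, Q) ∈ M(η)`. -/
def uElt (n : ℕ) (l : ℤ) (Q : Uq q) : Mmod q α :=
  q ^ (2 * (n : ℤ) * l) •
    ((K2z q l *
        (∑ k ∈ Finset.range (n + 1), ∑ j ∈ Finset.range (n - k + 1),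
          akj q α n k j •
            (F₂ q ^ (n - k) * F₃ q ^ k * K2z q (2 * (j : ℤ)) *
              Kz q (-(2 * (j : ℤ) + (k : ℤ))))) * Q) • vη q α)

/-- The value `h_n(κ, c) = q^{3-2n}κ + q^{2n-3}κ⁻¹ - (q - q⁻¹)²c`. -/
def hval (n : ℕ) (κ c : ℂ) : ℂ :=
  q ^ (3 - 2 * (n : ℤ)) * κ + q ^ (2 * (n : ℤ) - 3) * κ⁻¹ - (q - q⁻¹) ^ 2 * c
/-- A pair `(κ, c)` is critical if `h_n(κ, c) = 0` for some positive integer `n`. -/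
def Critical (κ c : ℂ) : Prop := ∃ n : ℕ, 0 < n ∧ hval q n κ c = 0

/-- The set `Î_n = {Q : h_n(K, C₁)Q ∈ I}`. -/
def hatI (I : Ideal (Acal q)) (n : ℕ) : Set (Acal q) := {Q | hnA q n * Q ∈ I}
/-- An ideal `I` is non-critical if `Î_n = I` for all positive `n`. -/
def NonCriticalIdeal (I : Ideal (Acal q)) : Prop :=
  ∀ n : ℕ, 0 < n → hatI q I n = (I : Set (Acal q))

end UqSl3

theorem two_sub_add_inv_ne_zero {K : Type*} [Field K] [CharZero K] {q : K} (hq : q ≠ 1) :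
    2 - (q + q⁻¹) ≠ 0 := by
  rcases eq_or_ne q 0 with rfl | hq0
  · -- the junk value `0⁻¹ = 0` leaves `2 ≠ 0`, which is where `CharZero` is needed
    norm_num
  · intro h
    have hsq : (q - 1) ^ 2 = 0 := by
      field_simp at h
      linear_combination -h
    exact hq (sub_eq_zero.mp (pow_eq_zero_iff two_ne_zero |>.mp hsq))

theorem AlgHom.mul_eq_zero_of_serre {K A : Type*} [Field K] [CharZero K] [Semiring A] [Algebra K A]
    (χ : A →ₐ[K] K) {q : K} (hq : q ≠ 1) {x y : A}
    (h : x ^ 2 * y + y * x ^ 2 = (q + q⁻¹) • (x * y * x)) : χ x * χ y = 0 := by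
  have hχ := congrArg χ h
  simp only [map_add, map_mul, map_pow, map_smul, smul_eq_mul] at hχ
  have hsq : χ x ^ 2 * χ y = 0 := by
    have : (2 - (q + q⁻¹)) * (χ x ^ 2 * χ y) = 0 := by linear_combination hχ
    exact (mul_eq_zero.mp this).resolve_left (two_sub_add_inv_ne_zero hq)
  exact pow_eq_zero_iff two_ne_zero |>.mp (by linear_combination χ y * hsq)

namespace UqSl3

variable (q : ℂ)

theorem serre_E₁ : E₁ q ^ 2 * E₂ q + E₂ q * E₁ q ^ 2 = (q + q⁻¹) • (E₁ q * E₂ q * E₁ q) := by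
  simpa only [E₁, E₂, map_add, map_mul, map_pow, map_smul] using rel_eq q rel.serreE1

theorem serre_E₁_Uplus :
    (⟨E₁ q, E1_mem_Uplus q⟩ : Uplus q) ^ 2 * ⟨E₂ q, E2_mem_Uplus q⟩ +
        ⟨E₂ q, E2_mem_Uplus q⟩ * (⟨E₁ q, E1_mem_Uplus q⟩ : Uplus q) ^ 2 =
      (q + q⁻¹) • ((⟨E₁ q, E1_mem_Uplus q⟩ : Uplus q) * ⟨E₂ q, E2_mem_Uplus q⟩ *
        ⟨E₁ q, E1_mem_Uplus q⟩) :=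
  Subtype.ext (serre_E₁ q)

theorem E₁_mul_E₂_Uplus :
    (⟨E₁ q, E1_mem_Uplus q⟩ : Uplus q) * ⟨E₂ q, E2_mem_Uplus q⟩ =
      ⟨E₃ q, E3_mem_Uplus q⟩ +
        q⁻¹ • ((⟨E₂ q, E2_mem_Uplus q⟩ : Uplus q) * ⟨E₁ q, E1_mem_Uplus q⟩) :=
  Subtype.ext (sub_add_cancel _ _).symm

end UqSl3

open UqSl3 in
theorem statement0_general (q : ℂ) (hq : ∀ n : ℕ, n ≠ 0 → q ^ n ≠ 1)
    (η : Uplus q →ₐ[ℂ] ℂ) :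
    η ⟨E₁ q, E1_mem_Uplus q⟩ * η ⟨E₂ q, E2_mem_Uplus q⟩ = 0 ∧
    η ⟨E₃ q, E3_mem_Uplus q⟩ =
      (1 - q⁻¹) * (η ⟨E₁ q, E1_mem_Uplus q⟩ * η ⟨E₂ q, E2_mem_Uplus q⟩) ∧
    ¬ ∃ η' : Uplus q →ₐ[ℂ] ℂ,
        η' ⟨E₁ q, E1_mem_Uplus q⟩ ≠ 0 ∧ η' ⟨E₂ q, E2_mem_Uplus q⟩ ≠ 0 := by
  have hq1 : q ≠ 1 := by simpa using hq 1 one_ne_zero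
  have hprod := η.mul_eq_zero_of_serre hq1 (serre_E₁_Uplus q)
  refine ⟨hprod, ?_, ?_⟩
  · have h := congrArg η (E₁_mul_E₂_Uplus q)
    rw [map_mul, map_add, map_smul, map_mul, smul_eq_mul] at h
    linear_combination -h
  · rintro ⟨η', h₁, h₂⟩
    exact mul_ne_zero h₁ h₂ (η'.mul_eq_zero_of_serre hq1 (serre_E₁_Uplus q))

open UqSl3 in
/-- For every algebra homomorphism `η : U⁺ → ℂ` one has `η(E₁)η(E₂) = 0` and
`η(E₃) = (1 - q⁻¹)η(E₁)η(E₂)`; in particular there is no non-singular Whittaker function. -/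
theorem statement0 (q : ℂ) (hq0 : q ≠ 0) (hq : ∀ n : ℕ, n ≠ 0 → q ^ n ≠ 1)
    (η : Uplus q →ₐ[ℂ] ℂ) :
    η ⟨E₁ q, E1_mem_Uplus q⟩ * η ⟨E₂ q, E2_mem_Uplus q⟩ = 0 ∧
    η ⟨E₃ q, E3_mem_Uplus q⟩ =
      (1 - q⁻¹) * (η ⟨E₁ q, E1_mem_Uplus q⟩ * η ⟨E₂ q, E2_mem_Uplus q⟩) ∧
    ¬ ∃ η' : Uplus q →ₐ[ℂ] ℂ,
        η' ⟨E₁ q, E1_mem_Uplus q⟩ ≠ 0 ∧ η' ⟨E₂ q, E2_mem_Uplus q⟩ ≠ 0 :=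
  statement0_general q hq η
end
end

section
/- Set g = F₂(1 − q^{-2} K₂² K^{-2}) + α(1 − q^{-2}) F₃ K^{-1} ∈ U. Then for every n ∈ ℕ, l ∈ ℤ and Q ∈ ℂ[K^{±1}, C₁], one has u(n, l, Q) = q^{2nl} K₂^l g^n Q v_η in M(η). -/
/-!
Formalization of Whittaker modules for the quantum group `U_q(sl₃)`.

Generator indices in the free algebra on `Fin 8`:
`0 = E₁`, `1 = E₂`, `2 = F₁`, `3 = F₂`, `4 = K₁`, `5 = K₁⁻¹`, `6 = K₂`, `7 = K₂⁻¹`.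
-/

noncomputable section
open scoped BigOperators

open UqSl3 in
/-- The element `g = F₂(1 - q⁻²K₂²K⁻²) + α(1 - q⁻²)F₃K⁻¹`. -/
def gElt (q α : ℂ) : Uq q :=
  F₂ q * (1 - q ^ (-2 : ℤ) • (K2z q 2 * Kz q (-2))) +
    (α * (1 - q ^ (-2 : ℤ))) • (F₃ q * Kz q (-1))

/-!
Write `A = F₂`, `B = F₃K⁻¹` and `C = F₂K₂²K⁻²`, so that `g = A + α(1 - q⁻²)B - q⁻²C`.
These three elements `q²`-commute in the order `A, B, C`: `BA = q²AB`, `CA = q²AC`, `CB = q²BC`.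
Hence `gⁿ` expands by the `q`-trinomial theorem with Gaussian binomial coefficients in `q²`, and
`AⁱBᵏCʲ` is a power of `q` times the normal-ordered monomial `F₂^{i+j}F₃ᵏK₂^{2j}K^{-2j-k}`.
Since the Gaussian binomial `[m, k]_{q²}` is `q^{k(m-k)}` times the symmetric `binq(m, k)`
(a comparison of quotients of `q`-factorials, which are nonzero as `q` is not a root of unity),
the resulting coefficient is exactly `a_{kj}(n)`. So `gⁿ = Σ a_{kj}(n) F₂^{n-k}F₃ᵏK₂^{2j}K^{-2j-k}`
already holds in `U`, and the theorem follows by multiplying by `q^{2nl}K₂ˡ` and applying to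
`Q v_η`.
-/

open Finset

section QCommute

variable {R A : Type*} [CommSemiring R] [Semiring A] [Algebra R A] {u v x y : A} {a b r : R}

theorem pow_mul_of_mul_eq_smul (h : y * x = r • (x * y)) (j : ℕ) :
    y ^ j * x = r ^ j • (x * y ^ j) := by
  induction j with
  | zero => simp
  | succ j ih =>
    rw [pow_succ, mul_assoc, h, mul_smul_comm, ← mul_assoc, ih, smul_mul_assoc, smul_smul,
      mul_assoc, ← pow_succ, ← pow_succ']

theorem pow_mul_pow_of_mul_eq_smul (h : y * x = r • (x * y)) (j k : ℕ) :
    y ^ j * x ^ k = r ^ (j * k) • (x ^ k * y ^ j) := by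
  induction k with
  | zero => simp
  | succ k ih =>
    rw [pow_succ, ← mul_assoc, ih, smul_mul_assoc, mul_assoc, pow_mul_of_mul_eq_smul h,
      mul_smul_comm, smul_smul, ← mul_assoc, ← pow_succ, ← pow_add, Nat.mul_succ]

theorem mul_mul_of_mul_eq_smul (hu : u * x = a • (x * u)) (hv : v * x = b • (x * v)) :
    u * v * x = (a * b) • (x * (u * v)) := by
  rw [mul_assoc, hv, mul_smul_comm, ← mul_assoc, hu, smul_mul_assoc, smul_smul, mul_assoc,
    mul_comm a]

theorem mul_mul_of_mul_eq_smul' (hx : u * x = a • (x * u)) (hy : u * y = b • (y * u)) :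
    u * (x * y) = (a * b) • (x * y * u) := by
  rw [← mul_assoc, hx, smul_mul_assoc, mul_assoc, hy, mul_smul_comm, smul_smul, ← mul_assoc]

theorem mul_pow_of_mul_eq_smul (h : y * x = r • (x * y)) (k : ℕ) :
    (x * y) ^ k = r ^ k.choose 2 • (x ^ k * y ^ k) := by
  induction k with
  | zero => simp
  | succ k ih =>
    rw [pow_succ, ih, smul_mul_assoc, mul_assoc, ← mul_assoc (y ^ k), pow_mul_of_mul_eq_smul h,
      smul_mul_assoc, mul_smul_comm, smul_smul, ← pow_add, Nat.choose_succ_succ',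
      Nat.choose_one_right, add_comm k, ← mul_assoc, ← mul_assoc, ← pow_succ, mul_assoc, ← pow_succ]

/-- `gaussBinom p i j` is the Gaussian binomial coefficient `[i + j, i]_p`: the coefficient of
`x ^ i * y ^ j` in `(x + y) ^ (i + j)` when `y * x = p • (x * y)`. -/
def gaussBinom (p : R) : ℕ → ℕ → R
  | 0, _ => 1
  | _ + 1, 0 => 1
  | i + 1, j + 1 => p ^ (j + 1) * gaussBinom p i (j + 1) + gaussBinom p (i + 1) j

@[simp]
theorem gaussBinom_zero_left (p : R) (j : ℕ) : gaussBinom p 0 j = 1 := by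
  simp [gaussBinom]

@[simp]
theorem gaussBinom_zero_right (p : R) (i : ℕ) : gaussBinom p i 0 = 1 := by
  cases i <;> simp [gaussBinom]

theorem gaussBinom_of_add_eq_succ (p : R) {i j n : ℕ} (hij : i + j = n + 1) :
    gaussBinom p i j = (if i = 0 then 0 else p ^ j * gaussBinom p (i - 1) j) +
      (if j = 0 then 0 else gaussBinom p i (j - 1)) := by
  match i, j with
  | 0, 0 => omega
  | 0, j + 1 => simp
  | i + 1, 0 => simp
  | i + 1, j + 1 => simp [gaussBinom]

theorem add_pow_eq_sum_gaussBinom (h : y * x = r • (x * y)) (n : ℕ) :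
    (x + y) ^ n = ∑ ij ∈ antidiagonal n, gaussBinom r ij.1 ij.2 • (x ^ ij.1 * y ^ ij.2) := by
  induction n with
  | zero => simp
  | succ n ih =>
    have hsplit : ∑ ij ∈ antidiagonal (n + 1), gaussBinom r ij.1 ij.2 • (x ^ ij.1 * y ^ ij.2) =
        ∑ ij ∈ antidiagonal (n + 1),
          (if ij.1 = 0 then 0 else r ^ ij.2 * gaussBinom r (ij.1 - 1) ij.2) •
            (x ^ ij.1 * y ^ ij.2) +
        ∑ ij ∈ antidiagonal (n + 1),
          (if ij.2 = 0 then 0 else gaussBinom r ij.1 (ij.2 - 1)) • (x ^ ij.1 * y ^ ij.2) := by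
      rw [← sum_add_distrib]
      refine sum_congr rfl fun ij hij => ?_
      rw [gaussBinom_of_add_eq_succ r (mem_antidiagonal.mp hij), add_smul]
    rw [hsplit, Nat.sum_antidiagonal_succ, Nat.sum_antidiagonal_succ', pow_succ, ih]
    simp only [sum_mul, mul_add, if_true, if_neg (Nat.succ_ne_zero _),
      zero_smul, zero_add, Nat.add_sub_cancel, smul_mul_assoc, mul_assoc,
      pow_mul_of_mul_eq_smul h, mul_smul_comm, smul_smul, ← pow_succ]
    simp only [← mul_assoc, ← pow_succ, mul_comm (gaussBinom r _ _)]

end QCommute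

theorem natCast_choose_two_mul_two (m : ℕ) : ((m.choose 2 : ℕ) : ℤ) * 2 = m * m - m := by
  induction m with
  | zero => simp
  | succ m ih =>
    rw [Nat.choose_succ_succ', Nat.choose_one_right]
    push_cast
    linear_combination ih

section UnitsInv

variable {K A : Type*} [Field K] [Semiring A] [Algebra K A] {x : A} {a : K}

theorem Units.inv_mul_eq_smul_of_mul_eq_smul {w : Aˣ} (h : ↑w * x = a • (x * ↑w)) (ha : a ≠ 0) :
    ↑w⁻¹ * x = a⁻¹ • (x * ↑w⁻¹) := by
  have hconj : x * ↑w⁻¹ = a • (↑w⁻¹ * x) := by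
    calc x * ↑w⁻¹ = ↑w⁻¹ * (↑w * x) * ↑w⁻¹ := by rw [Units.inv_mul_cancel_left]
      _ = a • (↑w⁻¹ * x) := by
        rw [h, mul_smul_comm, smul_mul_assoc, mul_assoc, mul_assoc, Units.mul_inv, mul_one]
  rw [hconj, smul_smul, inv_mul_cancel₀ ha, one_smul]

end UnitsInv

namespace UqSl3

variable {q : ℂ}

section QNumbers

theorem qint_natCast_add (hq0 : q ≠ 0) (a b : ℕ) :
    q ^ a * qint q ((a + b : ℕ) : ℤ) = q ^ a * q ^ b * qint q a + qint q b := by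
  simp only [qint, Nat.cast_add, zpow_neg, zpow_add₀ hq0, zpow_natCast]
  field_simp
  ring

theorem qint_natCast_ne_zero (hq0 : q ≠ 0) (hq : ∀ n : ℕ, n ≠ 0 → q ^ n ≠ 1) {m : ℕ}
    (hm : m ≠ 0) : qint q m ≠ 0 := by
  have hsq : q ^ 2 ≠ 1 := hq 2 two_ne_zero
  have hq2m : q ^ (2 * m) ≠ 1 := hq (2 * m) (by omega)
  simp only [qint, zpow_neg, zpow_natCast]
  refine div_ne_zero (fun h => hq2m ?_) (fun h => hsq ?_)
  · rw [pow_mul', sq]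
    nth_rw 1 [sub_eq_zero.mp h]
    exact inv_mul_cancel₀ (pow_ne_zero m hq0)
  · rw [sq]
    nth_rw 1 [sub_eq_zero.mp h]
    exact inv_mul_cancel₀ hq0

theorem qfact_ne_zero (hq0 : q ≠ 0) (hq : ∀ n : ℕ, n ≠ 0 → q ^ n ≠ 1) (m : ℕ) :
    qfact q m ≠ 0 := by
  induction m with
  | zero => exact one_ne_zero
  | succ m ih =>
    refine mul_ne_zero ?_ ih
    exact_mod_cast qint_natCast_ne_zero hq0 hq m.succ_ne_zero

theorem qfact_succ (m : ℕ) : qfact q (m + 1) = qint q ((m + 1 : ℕ) : ℤ) * qfact q m := by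
  rw [qfact, Nat.cast_succ]

theorem qbinom_mul_qbinom (hq0 : q ≠ 0) (hq : ∀ n : ℕ, n ≠ 0 → q ^ n ≠ 1) {n k j : ℕ}
    (h : k + j ≤ n) :
    qbinom q n k * qbinom q (n - k) j =
      qfact q n / (qfact q (n - (k + j)) * qfact q k * qfact q j) := by
  have hf := qfact_ne_zero hq0 hq
  rw [qbinom, qbinom, if_pos (by omega), if_pos (by omega), Nat.sub_sub]
  field_simp [hf]

theorem gaussBinom_sq_mul_qfact_mul_qfact (hq0 : q ≠ 0) (i j : ℕ) :
    gaussBinom (q ^ 2) i j * qfact q i * qfact q j = q ^ (i * j) * qfact q (i + j) := by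
  induction i generalizing j with
  | zero => simp [qfact]
  | succ i ihi =>
    induction j with
    | zero => simp [qfact]
    | succ j ihj =>
      have hsum := qint_natCast_add hq0 (i + 1) (j + 1)
      rw [show i + 1 + (j + 1) = i + (j + 1) + 1 by ring] at hsum ⊢
      have hi := ihi (j + 1)
      rw [qfact_succ j] at hi
      rw [qfact_succ i, show i + 1 + j = i + (j + 1) by ring] at ihj
      rw [gaussBinom, qfact_succ i, qfact_succ j, qfact_succ (i + (j + 1))]
      linear_combination (q ^ 2) ^ (j + 1) * qint q ((i + 1 : ℕ) : ℤ) * hi +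
        qint q ((j + 1 : ℕ) : ℤ) * ihj - q ^ ((i + 1) * j) * qfact q (i + (j + 1)) * hsum

end QNumbers

theorem akj_eq_gaussBinom (hq0 : q ≠ 0) (hq : ∀ n : ℕ, n ≠ 0 → q ^ n ≠ 1) (α : ℂ) {n k j : ℕ}
    (h : k + j ≤ n) :
    akj q α n k j = gaussBinom (q ^ 2) (n - (k + j)) (k + j) * gaussBinom (q ^ 2) k j *
      (α * (1 - q ^ (-2 : ℤ))) ^ k * (-q ^ (-2 : ℤ)) ^ j *
      q ^ (3 * k.choose 2 + 2 * j.choose 2 + 2 * (k * j)) := by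
  have hf := qfact_ne_zero hq0 hq
  set i := n - (k + j) with hi
  have hn : n = i + (k + j) := by omega
  have hG₁ : gaussBinom (q ^ 2) i (k + j) =
      q ^ (i * (k + j)) * qfact q n / (qfact q i * qfact q (k + j)) := by
    rw [eq_div_iff (mul_ne_zero (hf _) (hf _)), ← mul_assoc, hn]
    exact gaussBinom_sq_mul_qfact_mul_qfact hq0 i (k + j)
  have hG₂ : gaussBinom (q ^ 2) k j = q ^ (k * j) * qfact q (k + j) / (qfact q k * qfact q j) := by
    rw [eq_div_iff (mul_ne_zero (hf _) (hf _)), ← mul_assoc]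
    exact gaussBinom_sq_mul_qfact_mul_qfact hq0 k j
  have hexp : q ^ ((j : ℤ) * ((n : ℤ) - 3)) *
      q ^ ((k : ℤ) * (2 * (n : ℤ) + 2 * (j : ℤ) + (k : ℤ) - 7) / 2) =
      q ^ (i * (k + j)) * q ^ (k * j) * q ^ (3 * k.choose 2 + 2 * j.choose 2 + 2 * (k * j)) *
        (q ^ (-2 : ℤ)) ^ k * (q ^ (-2 : ℤ)) ^ j := by
    have hdiv : (k : ℤ) * (2 * (n : ℤ) + 2 * (j : ℤ) + (k : ℤ) - 7) / 2 =
        k * (n + j - 3) + k.choose 2 :=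
      Int.ediv_eq_of_eq_mul_left two_ne_zero (by linear_combination -natCast_choose_two_mul_two k)
    simp only [← zpow_natCast, ← zpow_mul, ← zpow_add₀ hq0, hdiv]
    congr 1
    rw [hn]
    push_cast
    linear_combination -natCast_choose_two_mul_two k - natCast_choose_two_mul_two j
  have hsub : 1 - q ^ (-2 : ℤ) = (q ^ 2 - 1) * q ^ (-2 : ℤ) := by
    rw [sub_mul, one_mul, ← zpow_natCast, ← zpow_add₀ hq0]
    norm_num
  rw [show akj q α n k j = (-1) ^ j * α ^ k * (q ^ 2 - 1) ^ k *
      (q ^ ((j : ℤ) * ((n : ℤ) - 3)) *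
        q ^ ((k : ℤ) * (2 * (n : ℤ) + 2 * (j : ℤ) + (k : ℤ) - 7) / 2)) *
      (qbinom q n k * qbinom q (n - k) j) by rw [akj]; ring,
    hexp, qbinom_mul_qbinom hq0 hq h, ← hi, hG₁, hG₂, hsub, mul_pow, mul_pow, neg_pow (q ^ _)]
  have := hf (k + j)
  field_simp

section Relations

theorem mkU_X_mul_X_eq_smul {a b : Fin 8} {c : ℂ} (h : rel q (X a * X b) (c • (X b * X a))) :
    mkU q (X a) * mkU q (X b) = c • (mkU q (X b) * mkU q (X a)) := by
  simpa only [map_mul, map_smul] using rel_eq q h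

theorem K₁_mul_F₁ : K₁ q * F₁ q = (q ^ 2)⁻¹ • (F₁ q * K₁ q) := mkU_X_mul_X_eq_smul rel.K1F1
theorem K₁_mul_F₂ : K₁ q * F₂ q = q • (F₂ q * K₁ q) := mkU_X_mul_X_eq_smul rel.K1F2
theorem K₂_mul_F₁ : K₂ q * F₁ q = q • (F₁ q * K₂ q) := mkU_X_mul_X_eq_smul rel.K2F1
theorem K₂_mul_F₂ : K₂ q * F₂ q = (q ^ 2)⁻¹ • (F₂ q * K₂ q) := mkU_X_mul_X_eq_smul rel.K2F2

theorem K₂_mul_K₁ : K₂ q * K₁ q = K₁ q * K₂ q := by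
  have h := rel_eq q (rel.Kcomm 6 4 (by decide) (by decide))
  rwa [map_mul, map_mul] at h

theorem F₃_mul_F₂ (hq0 : q ≠ 0) : F₃ q * F₂ q = q⁻¹ • (F₂ q * F₃ q) := by
  have hserre : F₂ q ^ 2 * F₁ q + F₁ q * F₂ q ^ 2 = (q + q⁻¹) • (F₂ q * F₁ q * F₂ q) := by
    have h := rel_eq q rel.serreF2
    rwa [map_add, map_mul, map_mul, map_smul, map_mul, map_mul, map_pow] at h
  simp only [F₃, sq, sub_mul, mul_sub, smul_mul_assoc, mul_smul_comm, mul_assoc, smul_sub,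
    smul_smul, inv_mul_cancel₀ hq0, one_smul] at hserre ⊢
  linear_combination (norm := module) hserre

theorem mul_F₃ {u : Uq q} {a b : ℂ} (h₁ : u * F₁ q = a • (F₁ q * u))
    (h₂ : u * F₂ q = b • (F₂ q * u)) : u * F₃ q = (a * b) • (F₃ q * u) := by
  rw [F₃, mul_sub, mul_smul_comm, mul_mul_of_mul_eq_smul' h₁ h₂,
    mul_mul_of_mul_eq_smul' h₂ h₁, sub_mul, smul_mul_assoc, smul_sub, smul_comm,
    mul_comm b]

end Relations

section CartanPart

theorem K₂u_commute_Ku : Commute (K₂u q) (Ku q) := by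
  have h : Commute (K₂u q) (K₁u q) := Units.ext K₂_mul_K₁
  exact h.mul_right ((Commute.refl _).pow_right 2)

theorem Ku_val : (Ku q : Uq q) = K₁ q * K₂ q ^ 2 := by
  simp only [Ku, Units.val_mul, Units.val_pow_eq_pow_val]
  rfl

theorem Ku_mul_F₁ (hq0 : q ≠ 0) : (Ku q : Uq q) * F₁ q = (1 : ℂ) • (F₁ q * Ku q) := by
  have h := mul_mul_of_mul_eq_smul (K₁_mul_F₁ (q := q)) (pow_mul_of_mul_eq_smul K₂_mul_F₁ 2)
  rwa [← Ku_val, show (q ^ 2)⁻¹ * q ^ 2 = (1 : ℂ) from inv_mul_cancel₀ (pow_ne_zero 2 hq0)] at h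

theorem Ku_mul_F₂ : (Ku q : Uq q) * F₂ q = (q * ((q ^ 2)⁻¹) ^ 2) • (F₂ q * Ku q) := by
  rw [Ku_val]
  exact mul_mul_of_mul_eq_smul K₁_mul_F₂ (pow_mul_of_mul_eq_smul K₂_mul_F₂ 2)

theorem Kz_neg_one_mul_F₂ (hq0 : q ≠ 0) : Kz q (-1) * F₂ q = q ^ 3 • (F₂ q * Kz q (-1)) := by
  have h := Units.inv_mul_eq_smul_of_mul_eq_smul (Ku_mul_F₂ (q := q)) (by simp [hq0])
  rw [show (q * ((q ^ 2)⁻¹) ^ 2)⁻¹ = q ^ 3 by field_simp] at h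
  simpa only [Kz, zpow_neg_one] using h

theorem Kz_neg_one_mul_F₃ (hq0 : q ≠ 0) : Kz q (-1) * F₃ q = q ^ 3 • (F₃ q * Kz q (-1)) := by
  have h := Units.inv_mul_eq_smul_of_mul_eq_smul
    (mul_F₃ (Ku_mul_F₁ hq0) Ku_mul_F₂) (by simp [hq0])
  rw [show (1 * (q * ((q ^ 2)⁻¹) ^ 2))⁻¹ = q ^ 3 by field_simp] at h
  simpa only [Kz, zpow_neg_one] using h

theorem K2z_two_mul_Kz_neg_two : K2z q 2 * Kz q (-2) = K₂ q ^ 2 * Kz q (-1) ^ 2 := by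
  simp only [K2z, Kz, ← Units.val_pow_eq_pow_val, ← zpow_natCast, ← zpow_mul]
  norm_num
  rfl

theorem K2z_two_mul_Kz_neg_two_mul_F₂ (hq0 : q ≠ 0) :
    K2z q 2 * Kz q (-2) * F₂ q = q ^ 2 • (F₂ q * (K2z q 2 * Kz q (-2))) := by
  have h := mul_mul_of_mul_eq_smul (pow_mul_of_mul_eq_smul K₂_mul_F₂ 2)
    (pow_mul_of_mul_eq_smul (Kz_neg_one_mul_F₂ hq0) 2)
  rwa [← K2z_two_mul_Kz_neg_two, show ((q ^ 2)⁻¹) ^ 2 * (q ^ 3) ^ 2 = q ^ 2 by field_simp] at h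

theorem K2z_two_mul_Kz_neg_two_mul_F₃ (hq0 : q ≠ 0) :
    K2z q 2 * Kz q (-2) * F₃ q = q ^ 4 • (F₃ q * (K2z q 2 * Kz q (-2))) := by
  have h := mul_mul_of_mul_eq_smul (pow_mul_of_mul_eq_smul (mul_F₃ K₂_mul_F₁ K₂_mul_F₂) 2)
    (pow_mul_of_mul_eq_smul (Kz_neg_one_mul_F₃ hq0) 2)
  rwa [← K2z_two_mul_Kz_neg_two, show (q * (q ^ 2)⁻¹) ^ 2 * (q ^ 3) ^ 2 = q ^ 4 by field_simp]
    at h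

theorem Kz_neg_one_commute_K2z_two_mul_Kz_neg_two :
    Commute (Kz q (-1)) (K2z q 2 * Kz q (-2)) :=
  (((K₂u_commute_Ku.zpow_zpow 2 (-1)).symm.units_val).mul_right
    (((Commute.refl (Ku q)).zpow_zpow (-1) (-2)).units_val))

theorem Kz_neg_one_pow_mul_pow (k j : ℕ) :
    Kz q (-1) ^ k * (K2z q 2 * Kz q (-2)) ^ j = K2z q (2 * j) * Kz q (-(2 * j + k)) := by
  simp only [K2z, Kz, ← Units.val_pow_eq_pow_val, ← Units.val_mul]
  congr 1
  rw [(K₂u_commute_Ku.zpow_zpow 2 (-2)).mul_pow, ← zpow_natCast, ← zpow_natCast, ← zpow_natCast,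
    ← zpow_mul, ← zpow_mul, ← zpow_mul, ← mul_assoc, ((K₂u_commute_Ku.zpow_zpow _ _).eq).symm,
    mul_assoc, ← zpow_add]
  congr 2
  ring

end CartanPart

section Expansion

theorem F₃_mul_Kz_mul_F₂ (hq0 : q ≠ 0) :
    F₃ q * Kz q (-1) * F₂ q = q ^ 2 • (F₂ q * (F₃ q * Kz q (-1))) := by
  rw [mul_assoc, Kz_neg_one_mul_F₂ hq0, mul_smul_comm, ← mul_assoc, F₃_mul_F₂ hq0, smul_mul_assoc,
    smul_smul, mul_assoc, show q ^ 3 * q⁻¹ = q ^ 2 by field_simp]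

theorem F₂_mul_K2z_mul_Kz_mul_F₂ (hq0 : q ≠ 0) :
    F₂ q * (K2z q 2 * Kz q (-2)) * F₂ q = q ^ 2 • (F₂ q * (F₂ q * (K2z q 2 * Kz q (-2)))) := by
  rw [mul_assoc, K2z_two_mul_Kz_neg_two_mul_F₂ hq0, mul_smul_comm, ← mul_assoc]

theorem F₂_mul_K2z_mul_Kz_mul_F₃_mul_Kz (hq0 : q ≠ 0) :
    F₂ q * (K2z q 2 * Kz q (-2)) * (F₃ q * Kz q (-1)) =
      q ^ 2 • (F₃ q * Kz q (-1) * (F₂ q * (K2z q 2 * Kz q (-2)))) := by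
  calc F₂ q * (K2z q 2 * Kz q (-2)) * (F₃ q * Kz q (-1))
      = F₂ q * (K2z q 2 * Kz q (-2) * F₃ q) * Kz q (-1) := by simp only [mul_assoc]
    _ = q ^ 4 • (F₂ q * (F₃ q * (Kz q (-1) * (K2z q 2 * Kz q (-2))))) := by
      rw [K2z_two_mul_Kz_neg_two_mul_F₃ hq0, Kz_neg_one_commute_K2z_two_mul_Kz_neg_two.eq]
      simp only [mul_smul_comm, smul_mul_assoc, mul_assoc]
    _ = q ^ 2 • (F₃ q * Kz q (-1) * F₂ q * (K2z q 2 * Kz q (-2))) := by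
      rw [F₃_mul_Kz_mul_F₂ hq0, smul_mul_assoc, smul_smul, ← pow_add]
      simp only [mul_assoc]
    _ = _ := by simp only [mul_assoc]

theorem F₂_pow_mul_pow_mul_pow (hq0 : q ≠ 0) (i k j : ℕ) :
    F₂ q ^ i * (F₃ q * Kz q (-1)) ^ k * (F₂ q * (K2z q 2 * Kz q (-2))) ^ j =
      q ^ (3 * k.choose 2 + 2 * j.choose 2 + 2 * (k * j)) •
        (F₂ q ^ (i + j) * F₃ q ^ k * K2z q (2 * j) * Kz q (-(2 * j + k))) := by
  rw [mul_pow_of_mul_eq_smul (K2z_two_mul_Kz_neg_two_mul_F₂ hq0) j, mul_smul_comm, ← mul_assoc,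
    mul_assoc (F₂ q ^ i), pow_mul_pow_of_mul_eq_smul (F₃_mul_Kz_mul_F₂ hq0),
    mul_pow_of_mul_eq_smul (Kz_neg_one_mul_F₃ hq0) k]
  simp only [mul_smul_comm, smul_mul_assoc, smul_smul, ← mul_assoc, ← pow_add]
  rw [mul_assoc _ (Kz q (-1) ^ k), Kz_neg_one_pow_mul_pow, ← mul_assoc]
  congr 1
  ring

end Expansion

theorem gElt_eq (α : ℂ) :
    gElt q α = F₂ q + ((α * (1 - q ^ (-2 : ℤ))) • (F₃ q * Kz q (-1)) +
      (-q ^ (-2 : ℤ)) • (F₂ q * (K2z q 2 * Kz q (-2)))) := by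
  rw [gElt, mul_sub, mul_one, mul_smul_comm]
  module

theorem gElt_pow_eq_sum_akj (hq0 : q ≠ 0) (hq : ∀ n : ℕ, n ≠ 0 → q ^ n ≠ 1) (α : ℂ) (n : ℕ) :
    gElt q α ^ n = ∑ k ∈ range (n + 1), ∑ j ∈ range (n - k + 1), akj q α n k j •
      (F₂ q ^ (n - k) * F₃ q ^ k * K2z q (2 * (j : ℤ)) * Kz q (-(2 * (j : ℤ) + (k : ℤ)))) := by
  set B := F₃ q * Kz q (-1)
  set C := F₂ q * (K2z q 2 * Kz q (-2))
  set c := α * (1 - q ^ (-2 : ℤ)) with hc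
  set d := -q ^ (-2 : ℤ) with hd
  set term : ℕ → ℕ → Uq q := fun k j => akj q α n k j •
    (F₂ q ^ (n - k) * F₃ q ^ k * K2z q (2 * (j : ℤ)) * Kz q (-(2 * (j : ℤ) + (k : ℤ))))
  have hCB : (d • C) * (c • B) = q ^ 2 • ((c • B) * (d • C)) := by
    rw [smul_mul_smul_comm, smul_mul_smul_comm, F₂_mul_K2z_mul_Kz_mul_F₃_mul_Kz hq0, smul_comm,
      mul_comm d]
  have hYA : (c • B + d • C) * F₂ q = q ^ 2 • (F₂ q * (c • B + d • C)) := by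
    rw [add_mul, smul_mul_assoc, smul_mul_assoc, F₃_mul_Kz_mul_F₂ hq0,
      F₂_mul_K2z_mul_Kz_mul_F₂ hq0, mul_add, mul_smul_comm, mul_smul_comm, smul_add, smul_comm c,
      smul_comm d]
  have hterm {i r k j : ℕ} (hir : i + r = n) (hkj : k + j = r) :
      gaussBinom (q ^ 2) i r • (F₂ q ^ i * (gaussBinom (q ^ 2) k j • ((c • B) ^ k * (d • C) ^ j))) =
        term k j := by
    subst hir hkj
    rw [smul_pow, smul_pow, smul_mul_smul_comm, mul_smul_comm, mul_smul_comm, ← mul_assoc,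
      F₂_pow_mul_pow_mul_pow hq0]
    simp only [term, smul_smul]
    rw [akj_eq_gaussBinom hq0 hq α (Nat.le_add_left _ _), show i + (k + j) - (k + j) = i by omega,
      show i + (k + j) - k = i + j by omega, hc, hd]
    congr 1
    ring
  calc gElt q α ^ n
      = ∑ ir ∈ antidiagonal n, ∑ kj ∈ antidiagonal ir.2, term kj.1 kj.2 := by
        rw [gElt_eq, add_pow_eq_sum_gaussBinom hYA]
        refine sum_congr rfl fun ir hir => ?_
        rw [add_pow_eq_sum_gaussBinom hCB, mul_sum, smul_sum]
        exact sum_congr rfl fun kj hkj => hterm (mem_antidiagonal.mp hir) (mem_antidiagonal.mp hkj)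
    _ = ∑ r ∈ range (n + 1), ∑ k ∈ range (r + 1), term k (r - k) := by
        rw [← Nat.sum_antidiagonal_swap, Nat.sum_antidiagonal_eq_sum_range_succ_mk]
        exact sum_congr rfl fun r _ => Nat.sum_antidiagonal_eq_sum_range_succ term r
    _ = ∑ k ∈ range (n + 1), ∑ j ∈ range (n + 1 - k), term k j := sum_range_diag_flip (n + 1) term
    _ = _ := sum_congr rfl fun k hk => by
        rw [Nat.sub_add_comm (by simpa [Nat.lt_succ_iff] using hk)]

end UqSl3

open UqSl3 in
theorem statement17_general (q α : ℂ) (hq0 : q ≠ 0) (hq : ∀ n : ℕ, n ≠ 0 → q ^ n ≠ 1)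
    (n : ℕ) (l : ℤ) (Q : Uq q) :
    uElt q α n l Q =
      q ^ (2 * (n : ℤ) * l) • ((K2z q l * gElt q α ^ n * Q) • vη q α) := by
  rw [uElt, gElt_pow_eq_sum_akj hq0 hq α n]

open UqSl3 in
/-- `u(n, l, Q) = q^{2nl} K₂^l g^n Q v_η` for every positive `n`, `l ∈ ℤ` and
`Q ∈ ℂ[K^{±1}, C₁]`. -/
theorem statement17 (q α : ℂ) (hq0 : q ≠ 0) (hq : ∀ n : ℕ, n ≠ 0 → q ^ n ≠ 1) (hα : α ≠ 0)
    (n : ℕ) (hn0 : 0 < n) (l : ℤ) (Q : Uq q) (hQ : Q ∈ Acal q) :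
    uElt q α n l Q =
      q ^ (2 * (n : ℤ) * l) • ((K2z q l * gElt q α ^ n * Q) • vη q α) :=
  statement17_general q α hq0 hq n l Q
end
end
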